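/- Let f : [ℓ,u] → ℝ be L_f-Lipschitz. Let the coarse uniform grid on [ℓ,u] have I ≥ 2 points and the fine uniform grid have J = 2I − 1 points. Let x*_fine ∈ ℝ^J and x*_coarse ∈ ℝ^I be the exact samples of f on the fine and coarse grids respectively, and let x = midpoint linear interpolation of x*_coarse ∈ ℝ^J. Then ‖x − x*_fine‖₂ ≤ L_f·(u − ℓ)/(2·√(I − 1)). -/

import Mathlib

open Finset

/-- Uniform grid with `I` points on `[l, u]` (0-indexed): `t[i] = l + i·(u−l)/(I−1)`. -/
noncomputable def unifGrid (l u : ℝ) (I : ℕ) (i : ℕ) : ℝ := l + i * (u - l) / ((I : ℝ) - 1)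

/-- Midpoint linear interpolation (0-indexed): even entries copy `x`, odd entries are midpoints. -/
noncomputable def midInterp (x : ℕ → ℝ) (j : ℕ) : ℝ :=
  if j % 2 = 0 then x (j / 2) else (x (j / 2) + x (j / 2 + 1)) / 2

/-!
Every even node of the fine grid is a coarse node, where the interpolant is exact, and every odd
node is the midpoint `m` of two neighbouring coarse nodes `a`, `b` at distance `h = (u − l)/(I − 1)`.
There the error is `((f a − f m) + (f b − f m))/2`, of size at most `L_f h / 2` by the Lipschitz
bound. Summing the `I − 1` odd squared errors gives
`(I − 1) (L_f h / 2)² = (L_f (u − l))² / (4 (I − 1))`.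
-/

theorem Finset.sum_range_two_mul_add_one {M : Type*} [AddCommMonoid M] (g : ℕ → M) (n : ℕ) :
    ∑ j ∈ range (2 * n + 1), g j =
      ∑ i ∈ range (n + 1), g (2 * i) + ∑ i ∈ range n, g (2 * i + 1) := by
  induction n with
  | zero => simp
  | succ n ih =>
    rw [show 2 * (n + 1) + 1 = 2 * n + 1 + 1 + 1 by ring, sum_range_succ, sum_range_succ, ih]
    simp only [sum_range_succ, show 2 * (n + 1) = 2 * n + 1 + 1 by ring]
    abel

theorem lipschitz_const_nonneg {s : Set ℝ} {f : ℝ → ℝ} {L : ℝ}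
    (hf : ∀ x ∈ s, ∀ y ∈ s, |f x - f y| ≤ L * |x - y|) {a b : ℝ} (ha : a ∈ s) (hb : b ∈ s)
    (hab : a ≠ b) : 0 ≤ L :=
  nonneg_of_mul_nonneg_left ((abs_nonneg _).trans (hf a ha b hb)) (abs_pos.2 (sub_ne_zero.2 hab))

theorem abs_average_sub_midpoint_le {s : Set ℝ} {f : ℝ → ℝ} {L : ℝ}
    (hf : ∀ x ∈ s, ∀ y ∈ s, |f x - f y| ≤ L * |x - y|) {a b : ℝ} (ha : a ∈ s) (hb : b ∈ s)
    (hm : (a + b) / 2 ∈ s) : |(f a + f b) / 2 - f ((a + b) / 2)| ≤ L * |b - a| / 2 := by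
  set m := (a + b) / 2
  have ham : |a - m| = |b - a| / 2 := by
    rw [show a - m = -((b - a) / 2) by ring, abs_neg, abs_div, abs_two]
  have hbm : |b - m| = |b - a| / 2 := by
    rw [show b - m = (b - a) / 2 by ring, abs_div, abs_two]
  calc |(f a + f b) / 2 - f m| = |(f a - f m) + (f b - f m)| / 2 := by
        rw [← abs_two, ← abs_div, abs_two]; ring_nf
    _ ≤ (|f a - f m| + |f b - f m|) / 2 := by gcongr; exact abs_add_le _ _
    _ ≤ (L * |a - m| + L * |b - m|) / 2 := by gcongr <;> apply hf <;> assumption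
    _ = L * |b - a| / 2 := by rw [ham, hbm]; ring

section Grid

variable (l u : ℝ) (n : ℕ)

theorem unifGrid_succ (i : ℕ) : unifGrid l u (n + 1) i = l + i * (u - l) / n := by
  simp [unifGrid]

theorem unifGrid_two_mul_add_one_even (i : ℕ) :
    unifGrid l u (2 * n + 1) (2 * i) = unifGrid l u (n + 1) i := by
  simp only [unifGrid_succ, Nat.cast_mul, Nat.cast_ofNat, mul_assoc]
  rw [mul_div_mul_left _ _ two_ne_zero]

theorem unifGrid_two_mul_add_one_odd (i : ℕ) :
    unifGrid l u (2 * n + 1) (2 * i + 1) =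
      (unifGrid l u (n + 1) i + unifGrid l u (n + 1) (i + 1)) / 2 := by
  simp only [unifGrid_succ]
  push_cast
  rw [← mul_div_mul_left ((i + 1 : ℝ) * (u - l)) (n : ℝ) two_ne_zero,
    ← mul_div_mul_left ((i : ℝ) * (u - l)) (n : ℝ) two_ne_zero]
  ring

theorem unifGrid_succ_sub (i : ℕ) :
    unifGrid l u (n + 1) (i + 1) - unifGrid l u (n + 1) i = (u - l) / n := by
  simp only [unifGrid_succ]
  push_cast
  ring

variable {l u n}

theorem unifGrid_mem_Icc (hlu : l ≤ u) {i : ℕ} (hi : i ≤ n) :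
    unifGrid l u (n + 1) i ∈ Set.Icc l u := by
  have hin : (i : ℝ) / n ≤ 1 := div_le_one_of_le₀ (by exact_mod_cast hi) n.cast_nonneg
  have hstep : i * (u - l) / n = i / n * (u - l) := by ring
  rw [unifGrid_succ, hstep]
  constructor
  · nlinarith [div_nonneg (i.cast_nonneg : (0 : ℝ) ≤ i) (n.cast_nonneg : (0 : ℝ) ≤ n)]
  · nlinarith

end Grid

theorem midInterp_two_mul (x : ℕ → ℝ) (i : ℕ) : midInterp x (2 * i) = x i := by
  simp [midInterp]

theorem midInterp_two_mul_add_one (x : ℕ → ℝ) (i : ℕ) :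
    midInterp x (2 * i + 1) = (x i + x (i + 1)) / 2 := by
  simp [midInterp, Nat.mul_add_div two_pos]

section Samples

variable {l u : ℝ} {n : ℕ} {f : ℝ → ℝ} {xcoarse xfine : ℕ → ℝ}

theorem midInterp_sub_eq_zero_of_even
    (hxc : ∀ i < n + 1, xcoarse i = f (unifGrid l u (n + 1) i))
    (hxf : ∀ j < 2 * n + 1, xfine j = f (unifGrid l u (2 * n + 1) j)) {i : ℕ} (hi : i ≤ n) :
    midInterp xcoarse (2 * i) - xfine (2 * i) = 0 := by
  rw [midInterp_two_mul, hxc i (by omega), hxf (2 * i) (by omega),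
    unifGrid_two_mul_add_one_even, sub_self]

theorem abs_midInterp_sub_le_of_odd (hlu : l ≤ u) {Lf : ℝ}
    (hfLip : ∀ s ∈ Set.Icc l u, ∀ t ∈ Set.Icc l u, |f s - f t| ≤ Lf * |s - t|)
    (hxc : ∀ i < n + 1, xcoarse i = f (unifGrid l u (n + 1) i))
    (hxf : ∀ j < 2 * n + 1, xfine j = f (unifGrid l u (2 * n + 1) j)) {i : ℕ} (hi : i < n) :
    |midInterp xcoarse (2 * i + 1) - xfine (2 * i + 1)| ≤ Lf * (u - l) / (2 * n) := by
  have hmid := abs_average_sub_midpoint_le hfLip (unifGrid_mem_Icc hlu (n := n) hi.le)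
    (unifGrid_mem_Icc hlu (n := n) hi)
    (unifGrid_two_mul_add_one_odd l u n i ▸ unifGrid_mem_Icc hlu (n := 2 * n) (by omega))
  rw [unifGrid_succ_sub, abs_of_nonneg (div_nonneg (sub_nonneg.2 hlu) n.cast_nonneg)] at hmid
  rw [midInterp_two_mul_add_one, hxc i (by omega), hxc (i + 1) (by omega),
    hxf (2 * i + 1) (by omega), unifGrid_two_mul_add_one_odd]
  calc _ ≤ Lf * ((u - l) / n) / 2 := hmid
    _ = Lf * (u - l) / (2 * n) := by ring

end Samples

/-- Exact interpolation error bound. -/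
theorem exact_interpolation
    (l u : ℝ) (hlu : l < u) (I : ℕ) (hI : 2 ≤ I)
    (f : ℝ → ℝ) (Lf : ℝ)
    (hfLip : ∀ s ∈ Set.Icc l u, ∀ t ∈ Set.Icc l u, |f s - f t| ≤ Lf * |s - t|)
    (xcoarse xfine : ℕ → ℝ)
    (hxc : ∀ i < I, xcoarse i = f (unifGrid l u I i))
    (hxf : ∀ j < 2 * I - 1, xfine j = f (unifGrid l u (2 * I - 1) j)) :
    Real.sqrt (∑ j ∈ range (2 * I - 1), (midInterp xcoarse j - xfine j) ^ 2) ≤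
      Lf * (u - l) / (2 * Real.sqrt ((I : ℝ) - 1)) := by
  obtain ⟨n, rfl⟩ : ∃ n, I = n + 1 := ⟨I - 1, by omega⟩
  have hn : (0 : ℝ) < n := by exact_mod_cast (by omega : 0 < n)
  rw [show 2 * (n + 1) - 1 = 2 * n + 1 by omega] at hxf ⊢
  rw [show ((n + 1 : ℕ) : ℝ) - 1 = n by push_cast; ring]
  have hLf : 0 ≤ Lf := lipschitz_const_nonneg hfLip (Set.left_mem_Icc.2 hlu.le)
    (Set.right_mem_Icc.2 hlu.le) hlu.ne
  set B := Lf * (u - l) / (2 * n)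
  have hsum : ∑ j ∈ range (2 * n + 1), (midInterp xcoarse j - xfine j) ^ 2 ≤ n * B ^ 2 := by
    rw [sum_range_two_mul_add_one, sum_eq_zero fun i hi => by
      rw [midInterp_sub_eq_zero_of_even hxc hxf (Nat.lt_succ_iff.1 (mem_range.1 hi)),
        zero_pow two_ne_zero], zero_add]
    calc _ ≤ ∑ _i ∈ range n, B ^ 2 := sum_le_sum fun i hi => by
          rw [← sq_abs]
          exact pow_le_pow_left₀ (abs_nonneg _)
            (abs_midInterp_sub_le_of_odd hlu.le hfLip hxc hxf (mem_range.1 hi)) 2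
      _ = n * B ^ 2 := by simp
  calc _ ≤ Real.sqrt (n * B ^ 2) := Real.sqrt_le_sqrt hsum
    _ = Real.sqrt n * B := by rw [Real.sqrt_mul hn.le, Real.sqrt_sq (by positivity)]
    _ = Lf * (u - l) / (2 * Real.sqrt n) := by
      have hsqrt : Real.sqrt n ^ 2 = n := Real.sq_sqrt hn.le
      simp only [B]
      field_simp
      rw [hsqrt]
      ring
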